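/- arXiv:2211.11648 — 2 statements merged into one kernel-verified Lean document; each statement's English description precedes it below -/
import Mathlib

section
/- For non-negative integers k, n, and m, S_k(n) = Σ_{j=0}^{k} (-1)^j · j! · [C(n+m+j-1, j+1) - C(m+j-1, j+1)] · {k,j}_{n+m}, where {k,j}_{n+m} = (1/j!) Σ_{i=0}^{j} (-1)^{j-i} C(j,i) (i+n+m)^k. -/
open Finset

/-- Stirling numbers of the second kind. -/
def st : ℕ → ℕ → ℕ
  | 0, 0 => 1
  | 0, _ + 1 => 0
  | _ + 1, 0 => 0
  | k + 1, j + 1 => (j + 1) * st k (j + 1) + st k j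

/-- Power sum `S_k(n) = 1^k + 2^k + ⋯ + n^k` as a rational. -/
def S (k n : ℕ) : ℚ := ∑ i ∈ range n, ((i : ℚ) + 1) ^ k

/-- The `r`-Stirling number of the second kind `{k, j}_r` (rational form). -/
def rSt (k j : ℕ) (r : ℚ) : ℚ :=
  (1 / (j.factorial : ℚ)) * ∑ i ∈ range (j + 1),
    (-1 : ℚ) ^ (j - i) * (j.choose i : ℚ) * ((i : ℚ) + r) ^ k

/-- The dual (non-central) Stirling number `{k, j}_{-r}`. -/
def nSt (k j r : ℕ) : ℚ :=
  (1 / (j.factorial : ℚ)) * ∑ i ∈ range (j + 1),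
    (-1 : ℚ) ^ (j - i) * (j.choose i : ℚ) * ((i : ℚ) - r) ^ k

/-- Generalized (falling-factorial) binomial coefficient `C(x, m)`. -/
def gch (x : ℚ) (m : ℕ) : ℚ := (∏ i ∈ range m, (x - i)) / (m.factorial : ℚ)

lemma gch_zero (x : ℚ) : gch x 0 = 1 := by simp [gch]

lemma fact_ne (j : ℕ) : (j.factorial : ℚ) ≠ 0 :=
  Nat.cast_ne_zero.mpr j.factorial_ne_zero

lemma succ_ne (j : ℕ) : ((j : ℚ) + 1) ≠ 0 := by positivity

lemma gch_succ_mul (x : ℚ) (j : ℕ) :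
    ((j : ℚ) + 1) * gch x (j + 1) = gch x j * (x - j) := by
  have h1 := fact_ne j
  simp only [gch, prod_range_succ, Nat.factorial_succ]
  push_cast
  field_simp

lemma gch_pascal (x : ℚ) (j : ℕ) :
    gch (x + 1) (j + 1) = gch x (j + 1) + gch x j := by
  have h1 := fact_ne j
  have h2 := succ_ne j
  have hp : ∏ i ∈ range (j + 1), (x + 1 - (i : ℚ)) = (∏ i ∈ range j, (x - i)) * (x + 1) := by
    rw [prod_range_succ']
    congr 1
    · exact prod_congr rfl fun i _ => by push_cast; ring
    · norm_num
  simp only [gch, prod_range_succ, Nat.factorial_succ, hp]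
  push_cast
  field_simp
  ring

lemma gch_hockey (j : ℕ) (n : ℕ) (x : ℚ) :
    ∑ i ∈ range n, gch (x + i) j = gch (x + n) (j + 1) - gch x (j + 1) := by
  induction n with
  | zero => simp
  | succ n ih =>
    rw [sum_range_succ, ih]
    have : x + ((n : ℚ) + 1) = (x + n) + 1 := by ring
    push_cast
    rw [this, gch_pascal]
    ring

lemma gch_neg (y : ℚ) (p : ℕ) : gch (-y) p = (-1) ^ p * gch (y + p - 1) p := by
  cases p with
  | zero => simp [gch]
  | succ q =>
    have h1 : ∏ i ∈ range (q + 1), (-y - (i : ℚ)) = (-1) ^ (q + 1) * ∏ i ∈ range (q + 1), (y + i) := by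
      have : ∀ i ∈ range (q+1), (-y - (i:ℚ)) = (-1) * (y + i) := fun i _ => by ring
      rw [prod_congr rfl this, prod_mul_distrib, prod_const, card_range]
    have h2 : ∏ i ∈ range (q + 1), (y + (q + 1 : ℚ) - 1 - i) = ∏ i ∈ range (q + 1), (y + i) := by
      rw [← prod_range_reflect (fun i => y + (i : ℚ)) (q + 1)]
      refine prod_congr rfl fun i hi => ?_
      rw [mem_range] at hi
      have hi' : i ≤ q := Nat.lt_succ_iff.mp hi
      have : ((q + 1 - 1 - i : ℕ) : ℚ) = (q : ℚ) - i := by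
        simp only [Nat.add_sub_cancel]
        push_cast [Nat.cast_sub hi']
        ring
      rw [this]
      ring
    simp only [gch]
    push_cast at h2 ⊢
    rw [h1, h2, mul_div_assoc]

def B (k j : ℕ) (r : ℚ) : ℚ :=
  ∑ i ∈ range (j + 1), (-1 : ℚ) ^ i * (j.choose i : ℚ) * ((i : ℚ) + r) ^ k

lemma neg_one_pow_sub {i j : ℕ} (h : i ≤ j) : (-1 : ℚ) ^ (j - i) = (-1) ^ j * (-1) ^ i := by
  have hh : (-1 : ℚ) ^ j = (-1) ^ (j - i) * (-1) ^ i := by rw [← pow_add]; congr 1; omega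
  rw [hh, mul_assoc, ← pow_add, ← two_mul, pow_mul]
  norm_num

lemma rSt_eq (k j : ℕ) (r : ℚ) : rSt k j r = (-1) ^ j / (j.factorial : ℚ) * B k j r := by
  unfold rSt B
  rw [mul_sum, mul_sum]
  refine sum_congr rfl fun i hi => ?_
  rw [mem_range, Nat.lt_succ_iff] at hi
  rw [neg_one_pow_sub hi]
  ring

lemma choose_cast_id (j : ℕ) : ∀ i, i ≤ j + 1 →
    ((i : ℚ) - ((j : ℚ) + 1)) * ((j + 1).choose i : ℚ) = -((j : ℚ) + 1) * (j.choose i : ℚ) := by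
  intro i hi
  rcases Nat.lt_or_ge i (j + 1) with h | h
  · have hij : i ≤ j := Nat.lt_succ_iff.mp h
    have key : (j + 1 - i) * (j + 1).choose i = (j + 1) * j.choose i := by
      have h1 : (j + 1) * j.choose (j - i) = (j + 1).choose (j - i + 1) * (j - i + 1) :=
        Nat.add_one_mul_choose_eq j (j - i)
      have h2 : j.choose (j - i) = j.choose i := Nat.choose_symm hij
      have h3 : (j + 1).choose (j - i + 1) = (j + 1).choose i := by
        rw [show j - i + 1 = (j + 1) - i from by omega]
        exact Nat.choose_symm (by omega)
      rw [h2, h3] at h1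
      rw [show j + 1 - i = j - i + 1 from by omega, Nat.mul_comm]
      exact h1.symm
    have := congrArg (fun t : ℕ => (t : ℚ)) key
    push_cast [Nat.cast_sub (by omega : i ≤ j + 1)] at this
    linear_combination -this
  · have : i = j + 1 := by omega
    subst this
    simp [Nat.choose_succ_self]

lemma B_rec (k j : ℕ) (r : ℚ) :
    B (k + 1) (j + 1) r = -((j : ℚ) + 1) * B k j r + ((j : ℚ) + 1 + r) * B k (j + 1) r := by
  have step1 : B (k + 1) (j + 1) r =
      (∑ i ∈ range (j + 2), (-1 : ℚ) ^ i * ((j + 1).choose i : ℚ) * ((i : ℚ) + r) ^ k *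
        ((i : ℚ) - ((j : ℚ) + 1))) + ((j : ℚ) + 1 + r) * B k (j + 1) r := by
    unfold B
    rw [mul_sum, ← sum_add_distrib]
    refine sum_congr rfl fun i _ => ?_
    rw [pow_succ]
    ring
  rw [step1]
  congr 1
  have step2 : ∀ i ∈ range (j + 2),
      (-1 : ℚ) ^ i * ((j + 1).choose i : ℚ) * ((i : ℚ) + r) ^ k * ((i : ℚ) - ((j : ℚ) + 1))
      = -((j : ℚ) + 1) * ((-1 : ℚ) ^ i * (j.choose i : ℚ) * ((i : ℚ) + r) ^ k) := by
    intro i hi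
    rw [mem_range, Nat.lt_succ_iff] at hi
    have := choose_cast_id j i hi
    linear_combination ((-1 : ℚ) ^ i * ((i : ℚ) + r) ^ k) * this
  rw [sum_congr rfl step2, ← mul_sum]
  congr 1
  unfold B
  rw [sum_range_succ]
  simp [Nat.choose_succ_self]

lemma B_zero_succ (j : ℕ) (r : ℚ) : B 0 (j + 1) r = 0 := by
  have h := Int.alternating_sum_range_choose (n := j + 1)
  rw [if_neg (Nat.succ_ne_zero j)] at h
  have h' : ((∑ i ∈ range (j + 2), (-1 : ℤ) ^ i * ((j+1).choose i : ℤ) : ℤ) : ℚ) = 0 := by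
    rw [h]; norm_num
  push_cast at h'
  unfold B
  rw [← h']
  exact sum_congr rfl fun i _ => by rw [pow_zero]; ring

lemma B_vanish (r : ℚ) : ∀ k j, k < j → B k j r = 0 := by
  intro k
  induction k with
  | zero =>
    intro j hj
    obtain ⟨j', rfl⟩ := Nat.exists_eq_add_of_lt hj
    simpa using B_zero_succ (0 + j') r
  | succ k ih =>
    intro j hj
    obtain ⟨j', rfl⟩ := Nat.exists_eq_succ_of_ne_zero (by omega : j ≠ 0)
    rw [B_rec, ih j' (by omega), ih (j' + 1) (by omega)]
    ring

lemma rSt_rec (k j : ℕ) (r : ℚ) :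
    rSt (k + 1) (j + 1) r = rSt k j r + ((j : ℚ) + 1 + r) * rSt k (j + 1) r := by
  rw [rSt_eq, rSt_eq, rSt_eq, B_rec]
  have h1 := fact_ne j
  have h2 := fact_ne (j + 1)
  rw [Nat.factorial_succ]
  push_cast
  field_simp
  ring

lemma rSt_zero_right (k : ℕ) (r : ℚ) : rSt k 0 r = r ^ k := by
  simp [rSt]

lemma rSt_zero_zero (r : ℚ) : rSt 0 0 r = 1 := by simp [rSt]

lemma rSt_vanish (k j : ℕ) (r : ℚ) (h : k < j) : rSt k j r = 0 := by
  rw [rSt_eq, B_vanish r k j h, mul_zero]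

lemma x_mul_gch (x : ℚ) (j : ℕ) :
    (x + r) * gch x j = ((j : ℚ) + 1) * gch x (j + 1) + ((j : ℚ) + r) * gch x j := by
  rw [gch_succ_mul]
  ring

lemma newton (k : ℕ) (x r : ℚ) :
    (x + r) ^ k = ∑ j ∈ range (k + 1), (j.factorial : ℚ) * rSt k j r * gch x j := by
  induction k with
  | zero => simp [rSt_zero_zero, gch_zero]
  | succ k ih =>
    have ih' : (x + r) ^ k = ∑ j ∈ range (k + 2), (j.factorial : ℚ) * rSt k j r * gch x j := by
      rw [sum_range_succ, rSt_vanish k (k + 1) r (Nat.lt_succ_self k)]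
      simp [ih]
    have expand : (x + r) ^ (k + 1) =
        (∑ j ∈ range (k + 2), ((j.factorial : ℚ) * ((j : ℚ) + 1)) * rSt k j r * gch x (j + 1))
        + ∑ j ∈ range (k + 2), ((j : ℚ) + r) * (j.factorial : ℚ) * rSt k j r * gch x j := by
      rw [pow_succ, mul_comm ((x + r) ^ k), ← pow_succ', pow_succ', mul_comm (x + r), ih',
        sum_mul, ← sum_add_distrib]
      refine sum_congr rfl fun j _ => ?_
      linear_combination ((j.factorial : ℚ) * rSt k j r) * x_mul_gch (r := r) x j
    rw [expand]
    -- first sum: drop top (vanishing) term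
    have hA : (∑ j ∈ range (k + 2), ((j.factorial : ℚ) * ((j : ℚ) + 1)) * rSt k j r * gch x (j + 1))
        = ∑ j ∈ range (k + 1), ((j.factorial : ℚ) * ((j : ℚ) + 1)) * rSt k j r * gch x (j + 1) := by
      rw [sum_range_succ, rSt_vanish k (k + 1) r (Nat.lt_succ_self k)]
      ring
    -- second sum: peel bottom term
    have hC : (∑ j ∈ range (k + 2), ((j : ℚ) + r) * (j.factorial : ℚ) * rSt k j r * gch x j)
        = (∑ j ∈ range (k + 1), (((j : ℚ) + 1) + r) * ((j + 1).factorial : ℚ) * rSt k (j + 1) r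
            * gch x (j + 1)) + r ^ (k + 1) := by
      rw [sum_range_succ']
      congr 1
      · exact sum_congr rfl fun j _ => by push_cast; ring
      · rw [rSt_zero_right, gch_zero]
        norm_num [pow_succ]
        ring
    rw [hA, hC, ← add_assoc,
      sum_range_succ' (fun j => (j.factorial : ℚ) * rSt (k + 1) j r * gch x j) (k + 1),
      rSt_zero_right, gch_zero]
    congr 1
    · rw [← sum_add_distrib]
      refine sum_congr rfl fun j _ => ?_
      rw [rSt_rec k j r, Nat.factorial_succ]
      push_cast
      ring
    · norm_num

theorem stmt15 (k n m : ℕ) :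
    S k n = ∑ j ∈ range (k + 1), (-1 : ℚ) ^ j * (j.factorial : ℚ) *
      (gch ((n : ℚ) + m + j - 1) (j + 1) - gch ((m : ℚ) + j - 1) (j + 1)) *
      rSt k j ((n : ℚ) + m) := by
  set r : ℚ := (n : ℚ) + m with hr
  have h1 : S k n = ∑ i ∈ range n, ∑ j ∈ range (k + 1),
      (j.factorial : ℚ) * rSt k j r * gch ((1 - r) + i) j := by
    unfold S
    refine sum_congr rfl fun i _ => ?_
    rw [show ((i : ℚ) + 1) = ((1 - r) + i) + r from by ring]
    exact newton k _ r
  rw [h1, sum_comm]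
  refine sum_congr rfl fun j _ => ?_
  rw [← mul_sum, gch_hockey]
  have e1 : (1 - r) + (n : ℚ) = -((m : ℚ) - 1) := by rw [hr]; ring
  have e2 : (1 : ℚ) - r = -(r - 1) := by ring
  rw [e1, e2, gch_neg, gch_neg]
  rw [show ((m : ℚ) - 1) + ((j + 1 : ℕ) : ℚ) - 1 = (m : ℚ) + j - 1 from by push_cast; ring]
  rw [show (r - 1) + ((j + 1 : ℕ) : ℚ) - 1 = r + j - 1 from by push_cast; ring]
  rw [pow_succ]
  ring
end

section
/- For any non-negative integer k, the Bernoulli number B_k satisfies B_k = Σ_{j=0}^{k} (-1)^j · j! · H_{j+1} · S(k+1, j+1), where H_m is the m-th harmonic number and S denotes the Stirling number of the second kind. -/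
open Finset

lemma st_succ (k j : ℕ) : st (k+1) (j+1) = (j+1) * st k (j+1) + st k j := rfl

lemma st_zero' (k : ℕ) : st k 0 = if k = 0 then 1 else 0 := by cases k <;> rfl

lemma st_eq_zero : ∀ k j, k < j → st k j = 0 := by
  intro k
  induction k with
  | zero => intro j h; cases j with | zero => omega | succ j => rfl
  | succ k ih =>
    intro j h
    cases j with
    | zero => omega
    | succ j => rw [st_succ, ih (j+1) (by omega), ih j (by omega)]; ring

lemma st_binom (n : ℕ) : ∀ j, ∑ i ∈ range (n+1), n.choose i * st i j = st (n+1) (j+1) := by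
  induction n with
  | zero =>
    intro j
    cases j <;> simp [st_succ, st]
  | succ n ih =>
    intro j
    rw [Finset.sum_range_succ']
    have h2 : ∑ i ∈ range (n+1), (n+1).choose (i+1) * st (i+1) j
        = ∑ i ∈ range (n+1), (n.choose i * st (i+1) j + n.choose (i+1) * st (i+1) j) := by
      apply Finset.sum_congr rfl; intro i _
      rw [Nat.choose_succ_succ']
      ring
    rw [h2, Finset.sum_add_distrib]
    have h3 : ∑ i ∈ range (n+1), n.choose (i+1) * st (i+1) j + (n+1).choose 0 * st 0 j
        = st (n+1) (j+1) := by
      rw [← ih j, Finset.sum_range_succ, Nat.choose_succ_self,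
        Finset.sum_range_succ' (fun i => n.choose i * st i j) n]
      simp
    rw [add_assoc, h3]
    cases j with
    | zero =>
      simp [st_succ, show ∀ i, st (i+1) 0 = 0 from fun i => rfl, st_zero']
    | succ m =>
      have h4 : ∑ i ∈ range (n+1), n.choose i * st (i+1) (m+1)
          = (m+1) * st (n+1) (m+2) + st (n+1) (m+1) := by
        rw [← ih (m+1), ← ih m, Finset.mul_sum, ← Finset.sum_add_distrib]
        apply Finset.sum_congr rfl; intro i _
        rw [st_succ]; ring
      rw [h4, st_succ (n+1) (m+1)]; ring

lemma key (n : ℕ) :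
    ∑ j ∈ range (n+1), (-1:ℚ)^j * j.factorial * st n (j+1) = if n = 1 then 1 else 0 := by
  cases n with
  | zero => simp [st]
  | succ m =>
    have h1 : ∀ j, ((st (m+1) (j+1) : ℕ) : ℚ) = (j+1) * st m (j+1) + st m j := by
      intro j; rw [st_succ]; push_cast; ring
    calc ∑ j ∈ range (m+2), (-1:ℚ)^j * j.factorial * st (m+1) (j+1)
        = ∑ j ∈ range (m+2), ((-1:ℚ)^j * (j+1).factorial * st m (j+1)
            + (-1:ℚ)^j * j.factorial * st m j) := by
          apply Finset.sum_congr rfl; intro j _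
          rw [h1 j, Nat.factorial_succ]; push_cast; ring
      _ = (∑ j ∈ range (m+2), (-1:ℚ)^j * (j+1).factorial * st m (j+1))
            + ∑ j ∈ range (m+2), (-1:ℚ)^j * j.factorial * st m j := by
          rw [Finset.sum_add_distrib]
      _ = if m + 1 = 1 then 1 else 0 := by
          rw [Finset.sum_range_succ' (fun j => (-1:ℚ)^j * j.factorial * st m j) (m+1),
            Finset.sum_range_succ (fun j => (-1:ℚ)^j * (j+1).factorial * st m (j+1)) (m+1)]
          rw [st_eq_zero m (m+2) (by omega)]
          have : ∑ j ∈ range (m+1), (-1:ℚ)^(j+1) * (j+1).factorial * st m (j+1)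
              = -∑ j ∈ range (m+1), (-1:ℚ)^j * (j+1).factorial * st m (j+1) := by
            rw [← Finset.sum_neg_distrib]
            apply Finset.sum_congr rfl; intro j _; ring
          rw [this, st_zero']
          simp

/-- The candidate value for the Bernoulli numbers. -/
noncomputable def b (k : ℕ) : ℚ :=
  ∑ j ∈ range (k+1), (-1:ℚ)^j * j.factorial / (j+1) * st k j

lemma sum_b (n : ℕ) : ∑ i ∈ range n, (n.choose i : ℚ) * b i = if n = 1 then 1 else 0 := by
  cases n with
  | zero => simp
  | succ m =>
    have hext : ∀ i ∈ range (m+1), (( (m+1).choose i : ℕ):ℚ) * b i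
        = ∑ j ∈ range (m+2), (-1:ℚ)^j * j.factorial / (j+1)
            * ((m+1).choose i * st i j) := by
      intro i hi
      simp only [mem_range] at hi
      rw [b, Finset.mul_sum]
      rw [← Finset.sum_subset (Finset.range_subset_range.2 (by omega : i + 1 ≤ m + 2))]
      · apply Finset.sum_congr rfl; intro j _; push_cast; ring
      · intro j _ hj
        simp only [mem_range, not_lt] at hj
        rw [st_eq_zero i j (by omega)]
        simp
    rw [Finset.sum_congr rfl hext, Finset.sum_comm]
    have hswap : ∀ j ∈ range (m+2),
        ∑ i ∈ range (m+1), (-1:ℚ)^j * j.factorial / (j+1) * ((m+1).choose i * st i j)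
        = (-1:ℚ)^j * j.factorial * st (m+1) (j+1) := by
      intro j hj
      rw [← Finset.mul_sum]
      have h2 : ∑ i ∈ range (m+1), (((m+1).choose i : ℚ)) * (st i j : ℚ)
          = (st (m+2) (j+1) : ℚ) - st (m+1) j := by
        have h := st_binom (m+1) j
        have hq : ∑ i ∈ range (m+2), (((m+1).choose i : ℚ)) * (st i j : ℚ)
            = (st (m+2) (j+1) : ℚ) := by exact_mod_cast h
        rw [Finset.sum_range_succ, Nat.choose_self] at hq
        push_cast at hq
        linarith
      have h3 : ((st (m+2) (j+1) : ℕ) : ℚ) - st (m+1) j = ((j:ℚ)+1) * st (m+1) (j+1) := by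
        rw [st_succ (m+1) j]; push_cast; ring
      calc (-1:ℚ)^j * j.factorial / (j+1)
            * ∑ i ∈ range (m+1), ((m+1).choose i : ℚ) * (st i j : ℚ)
          = (-1:ℚ)^j * j.factorial / (j+1) * (((j:ℚ)+1) * st (m+1) (j+1)) := by
            rw [h2, h3]
        _ = (-1:ℚ)^j * j.factorial * st (m+1) (j+1) := by
            have : ((j:ℚ)+1) ≠ 0 := by positivity
            field_simp
    rw [Finset.sum_congr rfl hswap, key (m+1)]

lemma b_eq_bernoulli (k : ℕ) : bernoulli k = b k := by
  induction k using Nat.strong_induction_on with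
  | _ k ih =>
    have h1 := sum_bernoulli (k+1)
    have h2 := sum_b (k+1)
    rw [Finset.sum_range_succ] at h1 h2
    have h3 : ∑ i ∈ range k, ((k+1).choose i : ℚ) * bernoulli i
        = ∑ i ∈ range k, ((k+1).choose i : ℚ) * b i := by
      apply Finset.sum_congr rfl; intro i hi
      rw [ih i (mem_range.1 hi)]
    rw [h3] at h1
    have hc : (((k+1).choose k : ℕ) : ℚ) ≠ 0 := by
      rw [Nat.choose_succ_self_right]; positivity
    have h4 : (((k+1).choose k : ℕ) : ℚ) * bernoulli k
        = (((k+1).choose k : ℕ) : ℚ) * b k := by linarith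
    exact mul_left_cancel₀ hc h4

theorem stmt19 (k : ℕ) :
    bernoulli k = ∑ j ∈ range (k + 1),
      (-1 : ℚ) ^ j * (j.factorial : ℚ) * (∑ i ∈ range (j + 1), 1 / ((i : ℚ) + 1)) *
      (st (k + 1) (j + 1) : ℚ) := by
  rw [b_eq_bernoulli k, b]
  have hp : ∀ j : ℕ, (-1:ℚ)^j * (j.factorial : ℚ) * (∑ i ∈ range (j+1), 1/((i:ℚ)+1))
        * (st (k+1) (j+1) : ℚ)
      = -((-1:ℚ)^(j+1) * ((j+1).factorial : ℚ) * (∑ i ∈ range (j+1), 1/((i:ℚ)+1))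
          * (st k (j+1) : ℚ))
        + (-1:ℚ)^j * (j.factorial : ℚ) * (∑ i ∈ range (j+1), 1/((i:ℚ)+1)) * (st k j : ℚ) := by
    intro j
    rw [st_succ k j, Nat.factorial_succ]; push_cast; ring
  rw [Finset.sum_congr rfl (fun j _ => hp j), Finset.sum_add_distrib]
  have h1 : ∑ j ∈ range (k+1),
        ((-1:ℚ)^(j+1) * ((j+1).factorial : ℚ) * (∑ i ∈ range (j+1), 1/((i:ℚ)+1))
          * (st k (j+1) : ℚ))
      = ∑ m ∈ range (k+1),
          (-1:ℚ)^m * (m.factorial : ℚ) * (∑ i ∈ range m, 1/((i:ℚ)+1)) * (st k m : ℚ) := by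
    have h := Finset.sum_range_succ'
      (fun m => (-1:ℚ)^m * (m.factorial : ℚ) * (∑ i ∈ range m, 1/((i:ℚ)+1)) * (st k m : ℚ))
      (k+1)
    rw [Finset.sum_range_succ
      (fun m => (-1:ℚ)^m * (m.factorial : ℚ) * (∑ i ∈ range m, 1/((i:ℚ)+1)) * (st k m : ℚ))
      (k+1), st_eq_zero k (k+1) (by omega)] at h
    simpa using h.symm
  rw [Finset.sum_neg_distrib, h1, neg_add_eq_sub, ← Finset.sum_sub_distrib]
  apply Finset.sum_congr rfl
  intro m hm
  rw [Finset.sum_range_succ (fun i => 1/((i:ℚ)+1)) m]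
  have hm1 : ((m:ℚ)+1) ≠ 0 := by positivity
  field_simp
  ring
end
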